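/- arXiv:math/0610056 — 4 statements merged into one kernel-verified Lean document; each statement's English description precedes it below -/
import Mathlib

section
/- If X is a real-valued random variable whose characteristic function is real-valued and nonnegative, then for every x ∈ ℝ and δ > 0, P(X ∈ [x−δ, x+δ]) ≤ 4·P(X ∈ (−δ, δ)). -/
/-!
The tent `y ↦ max (δ - |y|) 0` is, up to the constant `c = ∫ (1 - cos t) / t ^ 2`, the Fourier
transform of the nonnegative kernel `K_δ t = (1 - cos (δ t)) / t ^ 2`. By Fubini,
`c · E[tent (X - a)] = ∫ K_δ(t) Re (e^{-iat} φ(t)) dt ≤ ∫ K_δ(t) φ(t) dt = c · E[tent X]`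
as soon as `φ ≥ 0`. On `[x - δ, x + δ]` the two tents centred at `x ± δ/2` sum to at least `δ/2`,
while `tent X ≤ δ · 1{|X| < δ}`; so `(δ/2) P(X ∈ [x - δ, x + δ]) ≤ 2 E[tent X] ≤ 2δ P(|X| < δ)`.
-/

open MeasureTheory Set
open scoped ComplexOrder

/-- Its Fourier transform is `π` times the tent of half-width `|b|`. -/
noncomputable def fejerKernel (b t : ℝ) : ℝ := (1 - Real.cos (b * t)) / t ^ 2

noncomputable def tent (δ y : ℝ) : ℝ := max (δ - |y|) 0

namespace fejerKernel

lemma nonneg (b t : ℝ) : 0 ≤ fejerKernel b t :=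
  div_nonneg (sub_nonneg.2 (Real.cos_le_one _)) (sq_nonneg t)

lemma le_sq_div_two (b t : ℝ) : fejerKernel b t ≤ b ^ 2 / 2 := by
  rcases eq_or_ne t 0 with rfl | ht
  · simp [fejerKernel]; positivity
  · rw [fejerKernel, div_le_iff₀ (by positivity)]
    nlinarith [Real.one_sub_sq_div_two_le_cos (x := b * t)]

lemma mul_sq_le_two (b t : ℝ) : fejerKernel b t * t ^ 2 ≤ 2 := by
  rcases eq_or_ne t 0 with rfl | ht
  · simp
  · rw [fejerKernel, div_mul_cancel₀ _ (by positivity)]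
    linarith [Real.neg_one_le_cos (b * t)]

lemma le_div_one_add_sq (b t : ℝ) : fejerKernel b t ≤ (b ^ 2 / 2 + 2) * (1 + t ^ 2)⁻¹ := by
  rw [← div_eq_mul_inv, le_div_iff₀ (by positivity)]
  nlinarith [le_sq_div_two b t, mul_sq_le_two b t]

@[fun_prop]
lemma measurable (b : ℝ) : Measurable (fejerKernel b) := by
  unfold fejerKernel; fun_prop

lemma integrable (b : ℝ) : Integrable (fejerKernel b) :=
  (integrable_inv_one_add_sq.const_mul _).mono' (measurable b).aestronglyMeasurable
    (ae_of_all _ fun t => by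
      rw [Real.norm_of_nonneg (nonneg b t)]; exact le_div_one_add_sq b t)

lemma eq_sq_mul_comp_mul (b t : ℝ) : fejerKernel b t = b ^ 2 * fejerKernel 1 (b * t) := by
  rcases eq_or_ne b 0 with rfl | hb
  · simp [fejerKernel]
  rcases eq_or_ne t 0 with rfl | ht
  · simp [fejerKernel]
  · simp only [fejerKernel, one_mul]
    field_simp

lemma integral_eq_abs_mul (b : ℝ) : ∫ t, fejerKernel b t = |b| * ∫ t, fejerKernel 1 t := by
  simp_rw [eq_sq_mul_comp_mul b, integral_const_mul, Measure.integral_comp_mul_left, smul_eq_mul,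
    abs_inv, ← mul_assoc, ← sq_abs b]
  rcases eq_or_ne b 0 with rfl | hb
  · simp
  · field_simp

lemma integral_one_pos : 0 < ∫ t, fejerKernel 1 t := by
  rw [integral_pos_iff_support_of_nonneg (nonneg 1) (integrable 1)]
  refine (measure_mono fun t (ht : t ∈ Ioo 0 1) => ?_).trans_lt' (by simp)
  have hcos : Real.cos t < Real.cos 0 :=
    Real.cos_lt_cos_of_nonneg_of_le_pi le_rfl (by linarith [ht.2, Real.pi_gt_three]) ht.1
  rw [Real.cos_zero] at hcos
  exact (div_pos (by rw [one_mul]; linarith) (pow_pos ht.1 2)).ne'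

lemma mul_cos_eq (δ v t : ℝ) : fejerKernel δ t * Real.cos (v * t) =
    (fejerKernel (δ + v) t + fejerKernel (δ - v) t) / 2 - fejerKernel v t := by
  rcases eq_or_ne t 0 with rfl | ht
  · simp [fejerKernel]
  · simp only [fejerKernel, add_mul, sub_mul, Real.cos_add, Real.cos_sub]
    field_simp
    ring

end fejerKernel

lemma abs_add_add_abs_sub_div_two_sub_abs_eq_tent {δ : ℝ} (hδ : 0 ≤ δ) (v : ℝ) :
    (|δ + v| + |δ - v|) / 2 - |v| = tent δ v := by
  unfold tent
  cases abs_cases (δ + v) <;> cases abs_cases (δ - v) <;> cases abs_cases v <;>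
    cases max_cases (δ - |v|) 0 <;> linarith

lemma integral_fejerKernel_mul_cos {δ : ℝ} (hδ : 0 ≤ δ) (v : ℝ) :
    ∫ t, fejerKernel δ t * Real.cos (v * t) = (∫ t, fejerKernel 1 t) * tent δ v := by
  have hi := fejerKernel.integrable
  simp_rw [fejerKernel.mul_cos_eq, ← abs_add_add_abs_sub_div_two_sub_abs_eq_tent hδ v]
  have hsum : Integrable (fun t => (fejerKernel (δ + v) t + fejerKernel (δ - v) t) / 2) :=
    ((hi _).add (hi _)).div_const 2
  rw [integral_sub hsum (hi v), integral_div, integral_add (hi _) (hi _),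
    fejerKernel.integral_eq_abs_mul (δ + v), fejerKernel.integral_eq_abs_mul (δ - v),
    fejerKernel.integral_eq_abs_mul v]
  ring

lemma continuous_tent (δ : ℝ) : Continuous (tent δ) := by
  unfold tent; fun_prop

lemma tent_nonneg (δ y : ℝ) : 0 ≤ tent δ y := le_max_right _ _

lemma sub_abs_le_tent (δ y : ℝ) : δ - |y| ≤ tent δ y := le_max_left _ _

lemma tent_le_mul_indicator_Ioo {δ : ℝ} (hδ : 0 ≤ δ) (y : ℝ) :
    tent δ y ≤ δ * (Ioo (-δ) δ).indicator 1 y := by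
  by_cases hy : y ∈ Ioo (-δ) δ
  · simpa [hy, tent] using hδ
  · have : δ ≤ |y| := by
      rw [mem_Ioo, not_and_or, not_lt, not_lt] at hy
      rcases hy with hy | hy
      · linarith [neg_abs_le y]
      · linarith [le_abs_self y]
    simp [hy, tent, this]

lemma half_mul_indicator_Icc_le_tent_add_tent (δ x y : ℝ) :
    δ / 2 * (Icc (x - δ) (x + δ)).indicator 1 y ≤
      tent δ (y - (x - δ / 2)) + tent δ (y - (x + δ / 2)) := by
  by_cases hy : y ∈ Icc (x - δ) (x + δ)
  · rw [indicator_of_mem hy, Pi.one_apply, mul_one]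
    obtain ⟨h1, h2⟩ := hy
    rcases le_total y x with h | h
    · have : |y - (x - δ / 2)| ≤ δ / 2 := abs_le.2 ⟨by linarith, by linarith⟩
      linarith [sub_abs_le_tent δ (y - (x - δ / 2)), tent_nonneg δ (y - (x + δ / 2))]
    · have : |y - (x + δ / 2)| ≤ δ / 2 := abs_le.2 ⟨by linarith, by linarith⟩
      linarith [sub_abs_le_tent δ (y - (x + δ / 2)), tent_nonneg δ (y - (x - δ / 2))]
  · rw [indicator_of_notMem hy, mul_zero]
    exact add_nonneg (tent_nonneg _ _) (tent_nonneg _ _)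

section FiniteMeasure

variable {ν : Measure ℝ} [IsFiniteMeasure ν]

lemma integrable_tent_comp_sub (δ a : ℝ) : Integrable (fun y => tent δ (y - a)) ν :=
  .of_bound ((continuous_tent δ).comp (continuous_sub_right a)).aestronglyMeasurable |δ|
    (ae_of_all _ fun y => by
      rw [Real.norm_of_nonneg (tent_nonneg _ _)]
      exact max_le (by linarith [abs_nonneg (y - a), le_abs_self δ]) (abs_nonneg δ))

lemma integrable_fejerKernel_mul_cos_prod (δ a : ℝ) :
    Integrable (fun p : ℝ × ℝ => fejerKernel δ p.1 * Real.cos ((p.2 - a) * p.1))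
      (volume.prod ν) := by
  refine ((fejerKernel.integrable δ).mul_prod (integrable_const (1 : ℝ) (μ := ν))).mono
    (by fun_prop) (ae_of_all _ fun p => ?_)
  simp only [norm_mul, mul_one]
  exact mul_le_of_le_one_right (norm_nonneg _) (Real.abs_cos_le_one _)

lemma integral_fejerKernel_one_mul_integral_tent {δ : ℝ} (hδ : 0 ≤ δ) (a : ℝ) :
    (∫ t, fejerKernel 1 t) * ∫ y, tent δ (y - a) ∂ν =
      ∫ t, ∫ y, fejerKernel δ t * Real.cos ((y - a) * t) ∂ν := by
  simp_rw [← integral_const_mul, ← integral_fejerKernel_mul_cos hδ]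
  exact integral_integral_swap (integrable_fejerKernel_mul_cos_prod δ a) |>.symm

lemma integral_cos_sub_mul_eq_re (a t : ℝ) :
    ∫ y, Real.cos ((y - a) * t) ∂ν =
      (charFun ν t * Complex.exp ((-(a * t) : ℝ) * Complex.I)).re := by
  have hexp (y : ℝ) : Complex.exp (t * y * Complex.I) * Complex.exp ((-(a * t) : ℝ) * Complex.I) =
      Complex.exp (((y - a) * t : ℝ) * Complex.I) := by
    rw [← Complex.exp_add]; push_cast; ring_nf
  have hint : Integrable (fun y : ℝ => Complex.exp (((y - a) * t : ℝ) * Complex.I)) ν :=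
    .of_bound (by fun_prop) 1 (ae_of_all _ fun y => (Complex.norm_exp_ofReal_mul_I _).le)
  rw [charFun_apply_real, ← integral_mul_const]
  simp_rw [hexp]
  have hre := integral_re hint
  simp only [RCLike.re_to_complex, Complex.exp_ofReal_mul_I_re] at hre
  exact hre

lemma integral_cos_sub_mul_le (hν : ∀ t, 0 ≤ charFun ν t) (a t : ℝ) :
    ∫ y, Real.cos ((y - a) * t) ∂ν ≤ ∫ y, Real.cos (y * t) ∂ν := by
  obtain ⟨hre, him⟩ := Complex.nonneg_iff.1 (hν t)
  have hreal : charFun ν t = ((charFun ν t).re : ℂ) := Complex.ext rfl (by simp [← him])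
  have h0 := integral_cos_sub_mul_eq_re (ν := ν) 0 t
  simp only [sub_zero, zero_mul, neg_zero, Complex.ofReal_zero, Complex.exp_zero, mul_one] at h0
  rw [integral_cos_sub_mul_eq_re, h0, hreal, Complex.re_ofReal_mul, Complex.exp_ofReal_mul_I_re]
  exact mul_le_of_le_one_right hre (Real.cos_le_one _)

lemma integral_tent_sub_le (hν : ∀ t, 0 ≤ charFun ν t) {δ : ℝ} (hδ : 0 ≤ δ) (a : ℝ) :
    ∫ y, tent δ (y - a) ∂ν ≤ ∫ y, tent δ y ∂ν := by
  have h0 := integral_fejerKernel_one_mul_integral_tent (ν := ν) hδ 0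
  have hint0 := integrable_fejerKernel_mul_cos_prod (ν := ν) δ 0
  simp only [sub_zero] at h0 hint0
  refine le_of_mul_le_mul_left ?_ fejerKernel.integral_one_pos
  rw [integral_fejerKernel_one_mul_integral_tent hδ a, h0]
  refine integral_mono (integrable_fejerKernel_mul_cos_prod δ a).integral_prod_left
    hint0.integral_prod_left fun t => ?_
  simp only [integral_const_mul]
  exact mul_le_mul_of_nonneg_left (integral_cos_sub_mul_le hν a t) (fejerKernel.nonneg δ t)

theorem measure_Icc_le_four_mul_measure_Ioo_of_charFun_nonneg (hν : ∀ t, 0 ≤ charFun ν t)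
    (x : ℝ) {δ : ℝ} (hδ : 0 < δ) : ν (Icc (x - δ) (x + δ)) ≤ 4 * ν (Ioo (-δ) δ) := by
  have hint := integrable_tent_comp_sub (ν := ν) δ
  have hint0 := hint 0
  simp only [sub_zero] at hint0
  have hlower : δ / 2 * ν.real (Icc (x - δ) (x + δ)) ≤
      ∫ y, tent δ (y - (x - δ / 2)) ∂ν + ∫ y, tent δ (y - (x + δ / 2)) ∂ν := by
    rw [← integral_indicator_one measurableSet_Icc, ← integral_const_mul,
      ← integral_add (hint _) (hint _)]
    exact integral_mono (((integrable_const 1).indicator measurableSet_Icc).const_mul _)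
      ((hint _).add (hint _)) (half_mul_indicator_Icc_le_tent_add_tent δ x)
  have hupper : ∫ y, tent δ y ∂ν ≤ δ * ν.real (Ioo (-δ) δ) := by
    rw [← integral_indicator_one measurableSet_Ioo, ← integral_const_mul]
    exact integral_mono hint0 (((integrable_const 1).indicator measurableSet_Ioo).const_mul _)
      (tent_le_mul_indicator_Ioo hδ.le)
  have hreal : ν.real (Icc (x - δ) (x + δ)) ≤ 4 * ν.real (Ioo (-δ) δ) := by
    refine le_of_mul_le_mul_left ?_ (half_pos hδ)
    linarith [integral_tent_sub_le hν hδ.le (x - δ / 2), integral_tent_sub_le hν hδ.le (x + δ / 2)]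
  rwa [measureReal_def, measureReal_def, ← ENNReal.toReal_ofNat 4, ← ENNReal.toReal_mul,
    ENNReal.toReal_le_toReal (measure_ne_top _ _) (by finiteness)] at hreal

end FiniteMeasure

/-- If `X` is a real-valued random variable whose characteristic function is
real-valued and nonnegative, then for every `x ∈ ℝ` and `δ > 0`,
`P(X ∈ [x−δ, x+δ]) ≤ 4·P(X ∈ (−δ, δ))`. -/
theorem stmt0 {Ω : Type*} [MeasurableSpace Ω] (μ : Measure Ω) [IsProbabilityMeasure μ]
    (X : Ω → ℝ) (hX : Measurable X)
    (hφ : ∀ t : ℝ, 0 ≤ (∫ ω, Complex.exp (t * X ω * Complex.I) ∂μ).re ∧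
      (∫ ω, Complex.exp (t * X ω * Complex.I) ∂μ).im = 0)
    (x : ℝ) (δ : ℝ) (hδ : 0 < δ) :
    μ {ω | X ω ∈ Set.Icc (x - δ) (x + δ)} ≤ 4 * μ {ω | X ω ∈ Set.Ioo (-δ) δ} := by
  have : IsProbabilityMeasure (μ.map X) := Measure.isProbabilityMeasure_map hX.aemeasurable
  have hcharFun (t : ℝ) : 0 ≤ charFun (μ.map X) t := by
    rw [charFun_apply_real, integral_map hX.aemeasurable (by fun_prop)]
    exact Complex.nonneg_iff.2 ⟨(hφ t).1, (hφ t).2.symm⟩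
  have h := measure_Icc_le_four_mul_measure_Ioo_of_charFun_nonneg hcharFun x hδ
  rwa [Measure.map_apply hX measurableSet_Icc, Measure.map_apply hX measurableSet_Ioo] at h
end

section
/- Let (Y_n) be a sequence of random variables such that ∑_{n≥1} P(Y_n = 0) < ∞. Then there exists a deterministic sequence (g_n) of positive reals increasing to infinity such that lim g_n|Y_n| = +∞ almost surely. -/
open MeasureTheory Filter Set
open scoped ENNReal Topology

/-! Choose `ε n > 0` so small that `P(|Y n| < ε n) ≤ P(Y n = 0) + δ n` for a summable sequence
`δ`, which is possible by continuity from above. By Borel–Cantelli, almost surely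
`|Y n| ≥ ε n` eventually, so any deterministic `g n ≥ n / ε n` gives `g n |Y n| ≥ n`. -/

theorem biInter_setOf_abs_lt_eq_setOf_eq_zero {α : Type*} (f : α → ℝ) :
    ⋂ ε > (0 : ℝ), {x | |f x| < ε} = {x | f x = 0} := by
  ext x
  simp only [mem_iInter, mem_ofPred_eq]
  refine ⟨fun h => abs_eq_zero.1 (le_antisymm ?_ (abs_nonneg _)), fun h ε hε => by simpa [h]⟩
  exact le_of_forall_pos_lt_add fun ε hε => by simpa using h ε hε

section MeasureNearZero

variable {α : Type*} [MeasurableSpace α] {μ : Measure α} [IsFiniteMeasure μ] {f : α → ℝ}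

theorem tendsto_measure_abs_lt_nhdsGT_zero (hf : Measurable f) :
    Tendsto (fun ε => μ {x | |f x| < ε}) (𝓝[>] 0) (𝓝 (μ {x | f x = 0})) := by
  rw [← biInter_setOf_abs_lt_eq_setOf_eq_zero f]
  refine tendsto_measure_biInter_gt
    (fun ε _ => (measurableSet_lt hf.abs measurable_const).nullMeasurableSet)
    (fun ε ε' _ hεε' x hx => lt_of_lt_of_le hx hεε') ⟨1, one_pos, measure_ne_top μ _⟩

theorem exists_pos_measure_abs_lt_le (hf : Measurable f) {δ : ℝ≥0∞} (hδ : δ ≠ 0) :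
    ∃ ε > 0, μ {x | |f x| < ε} ≤ μ {x | f x = 0} + δ := by
  have hlt : μ {x | f x = 0} < μ {x | f x = 0} + δ :=
    ENNReal.lt_add_right (measure_ne_top μ _) hδ
  obtain ⟨ε, hε, hpos⟩ :=
    (((tendsto_measure_abs_lt_nhdsGT_zero hf).eventually_lt_const hlt).and
      self_mem_nhdsWithin).exists
  exact ⟨ε, hpos, hε.le⟩

end MeasureNearZero

theorem exists_monotone_tendsto_atTop_ge (a : ℕ → ℝ) :
    ∃ g : ℕ → ℝ, (∀ n, 0 < g n) ∧ Monotone g ∧ Tendsto g atTop atTop ∧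
      ∀ n, a n ≤ g n := by
  refine ⟨fun n => n + 1 + ∑ k ∈ Finset.range (n + 1), max (a k) 0, fun n => by positivity,
    fun m n hmn => ?_, ?_, fun n => ?_⟩
  · have hmn' : (m : ℝ) ≤ n := by exact_mod_cast hmn
    have := Finset.sum_le_sum_of_subset_of_nonneg
      (Finset.range_subset_range.2 (by omega : m + 1 ≤ n + 1)) fun k _ _ => le_max_right (a k) 0
    dsimp only
    linarith
  · refine tendsto_atTop_mono (fun n => ?_) tendsto_natCast_atTop_atTop
    have := Finset.sum_nonneg fun k (_ : k ∈ Finset.range (n + 1)) => le_max_right (a k) 0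
    linarith
  · have := Finset.single_le_sum (fun k _ => le_max_right (a k) 0) (Finset.self_mem_range_succ n)
    have := le_max_left (a n) 0
    dsimp only
    linarith [(n.cast_nonneg : (0 : ℝ) ≤ n)]

theorem tendsto_mul_abs_atTop_of_eventually_le {g y ε : ℕ → ℝ} (hε : ∀ n, 0 < ε n)
    (hg : ∀ n, n / ε n ≤ g n) (hy : ∀ᶠ n in atTop, ε n ≤ |y n|) :
    Tendsto (fun n => g n * |y n|) atTop atTop := by
  refine tendsto_atTop_mono' atTop (hy.mono fun n hn => ?_) tendsto_natCast_atTop_atTop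
  calc (n : ℝ) = n / ε n * ε n := (div_mul_cancel₀ _ (hε n).ne').symm
    _ ≤ g n * |y n| :=
      mul_le_mul (hg n) hn (hε n).le ((div_nonneg n.cast_nonneg (hε n).le).trans (hg n))

/-- If `∑ P(Y_n = 0) < ∞`, there is a deterministic positive sequence `g_n`
increasing to infinity with `lim g_n |Y_n| = +∞` a.s. -/
theorem stmt2 {Ω : Type*} [MeasurableSpace Ω] (μ : Measure Ω) [IsProbabilityMeasure μ]
    (Y : ℕ → Ω → ℝ) (hY : ∀ n, Measurable (Y n))
    (hsum : (∑' n : ℕ, μ {ω | Y n ω = 0}) ≠ ⊤) :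
    ∃ g : ℕ → ℝ, (∀ n, 0 < g n) ∧ Monotone g ∧ Tendsto g atTop atTop ∧
      ∀ᵐ ω ∂μ, Tendsto (fun n => g n * |Y n ω|) atTop atTop := by
  obtain ⟨δ, hδpos, hδsum⟩ := ENNReal.exists_pos_sum_of_countable one_ne_zero ℕ
  choose ε hεpos hε using fun n =>
    exists_pos_measure_abs_lt_le (μ := μ) (hY n) (ENNReal.coe_ne_zero.2 (hδpos n).ne')
  have hsmall : ∑' n, μ {ω | |Y n ω| < ε n} ≠ ∞ :=
    ne_top_of_le_ne_top (ENNReal.add_ne_top.2 ⟨hsum, ne_top_of_lt hδsum⟩)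
      ((ENNReal.tsum_le_tsum hε).trans_eq ENNReal.tsum_add)
  obtain ⟨g, hgpos, hgmono, hgtop, hge⟩ := exists_monotone_tendsto_atTop_ge fun n => n / ε n
  refine ⟨g, hgpos, hgmono, hgtop, ?_⟩
  filter_upwards [ae_eventually_notMem hsmall] with ω hω
  exact tendsto_mul_abs_atTop_of_eventually_le hεpos hge (hω.mono fun n hn => not_lt.1 hn)
end

section
/- Let (A_n) be a sequence of measurable sets such that there exist n_0 ≥ 1 and c > 0 with P(A_j ∩ A_k) ≤ c·P(A_j)·P(A_{k−j}) for all k, j ≥ n_0 with k − j ≥ n_0. Then P(A_n infinitely often) > 0 if and only if ∑_n P(A_n) = +∞. -/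
/-!
Second moment method. For a window `m ≤ k < n` put `S = ∑ μ (A k)` and
`Q = ∑ j, ∑ k, μ (A j ∩ A k)`; Cauchy–Schwarz for the counting function `∑ k, 𝟙_{A k}` gives
`S² ≤ Q · μ (⋃ k, A k)`. Pairs at distance at least `n₀` are controlled by the hypothesis and
contribute at most `2 c S (C + S)` with `C = ∑_{n₀ ≤ i < m} μ (A i)`, the remaining pairs at most
`(2 n₀ + 1) S`. As the series diverges, `n` can be chosen with `S` so large that `Q ≤ 4 c S²`,
so `μ (⋃ k ≥ m, A k) ≥ (4 c)⁻¹` for every `m ≥ n₀`, and continuity from above gives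
`μ (limsup A) ≥ (4 c)⁻¹ > 0`. The converse is the first Borel–Cantelli lemma.
-/

open MeasureTheory Filter Finset
open scoped ENNReal

theorem exists_lt_sum_Ico_of_tsum_eq_top {f : ℕ → ℝ≥0∞} (hf : ∀ i, f i ≠ ∞)
    (hsum : ∑' i, f i = ∞) (m : ℕ) {x : ℝ≥0∞} (hx : x ≠ ∞) :
    ∃ n, m ≤ n ∧ x < ∑ i ∈ Ico m n, f i := by
  have hlt : ∑ i ∈ range m, f i + x < ⨆ n, ∑ i ∈ range n, f i := by
    rw [← ENNReal.tsum_eq_iSup_nat, hsum]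
    exact ENNReal.add_lt_top.2 ⟨ENNReal.sum_lt_top.2 fun i _ => (hf i).lt_top, hx.lt_top⟩
  obtain ⟨n, hn⟩ := lt_iSup_iff.1 hlt
  have hmn : m ≤ n := by
    by_contra! h
    exact (hn.trans_le (sum_le_sum_of_subset (range_mono h.le))).not_ge le_self_add
  rw [← sum_range_add_sum_Ico _ hmn] at hn
  exact ⟨n, hmn, lt_of_add_lt_add_left hn⟩

theorem sq_lintegral_le_lintegral_sq_mul_measure {Ω : Type*} [MeasurableSpace Ω]
    {μ : Measure Ω} {f : Ω → ℝ≥0∞} {U : Set Ω} (hf : AEMeasurable f μ) (hU : MeasurableSet U)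
    (hfU : Function.support f ⊆ U) :
    (∫⁻ ω, f ω ∂μ) ^ 2 ≤ (∫⁻ ω, f ω ^ 2 ∂μ) * μ U := by
  set g : Ω → ℝ≥0∞ := U.indicator 1
  have hfg : f * g = f := by
    ext ω
    by_cases hω : ω ∈ U
    · simp [g, hω]
    · simp [Function.notMem_support.1 fun h => hω (hfU h)]
  have hg : ∫⁻ ω, g ω ^ (2 : ℝ) ∂μ = μ U := by
    rw [← lintegral_indicator_one hU]
    congr 1 with ω
    by_cases hω : ω ∈ U <;> simp [g, hω]
  have hholder : ∫⁻ ω, (f * g) ω ∂μ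
      ≤ (∫⁻ ω, f ω ^ (2 : ℝ) ∂μ) ^ (1 / (2 : ℝ)) * (∫⁻ ω, g ω ^ (2 : ℝ) ∂μ) ^ (1 / (2 : ℝ)) :=
    ENNReal.lintegral_mul_le_Lp_mul_Lq μ Real.HolderConjugate.two_two hf
      ((aemeasurable_const (b := (1 : ℝ≥0∞))).indicator hU)
  rw [hfg, hg] at hholder
  simp only [← ENNReal.rpow_natCast, Nat.cast_ofNat]
  calc (∫⁻ ω, f ω ∂μ) ^ (2 : ℝ)
      ≤ ((∫⁻ ω, f ω ^ (2 : ℝ) ∂μ) ^ (1 / (2 : ℝ)) * (μ U) ^ (1 / (2 : ℝ))) ^ (2 : ℝ) := by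
        gcongr
    _ = (∫⁻ ω, f ω ^ (2 : ℝ) ∂μ) * μ U := by
        rw [ENNReal.mul_rpow_of_nonneg _ _ zero_le_two, ← ENNReal.rpow_mul, ← ENNReal.rpow_mul]
        norm_num

theorem sq_sum_measure_le_sum_measure_inter_mul_measure_biUnion {Ω ι : Type*}
    [MeasurableSpace Ω] (μ : Measure Ω) (T : Finset ι) {A : ι → Set Ω}
    (hA : ∀ i ∈ T, MeasurableSet (A i)) :
    (∑ i ∈ T, μ (A i)) ^ 2 ≤ (∑ i ∈ T, ∑ j ∈ T, μ (A i ∩ A j)) * μ (⋃ i ∈ T, A i) := by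
  set N : Ω → ℝ≥0∞ := fun ω => ∑ i ∈ T, (A i).indicator 1 ω
  have hN : Measurable N :=
    Finset.measurable_sum _ fun i hi => measurable_one.indicator (hA i hi)
  have hN_support : Function.support N ⊆ ⋃ i ∈ T, A i := fun ω hω => by simpa [N] using hω
  have hN_sq : ∀ ω, N ω ^ 2 = ∑ i ∈ T, ∑ j ∈ T, (A i ∩ A j).indicator 1 ω := fun ω => by
    simp only [N, sq, sum_mul_sum, Set.inter_indicator_one, Pi.mul_apply]
  convert sq_lintegral_le_lintegral_sq_mul_measure hN.aemeasurable
    (T.measurableSet_biUnion hA) hN_support using 3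
  · rw [lintegral_finsetSum _ fun i hi => measurable_one.indicator (hA i hi)]
    exact sum_congr rfl fun i hi => (lintegral_indicator_one (hA i hi)).symm
  · simp_rw [hN_sq]
    have hAA : ∀ i ∈ T, ∀ j ∈ T, MeasurableSet (A i ∩ A j) :=
      fun i hi j hj => (hA i hi).inter (hA j hj)
    rw [lintegral_finsetSum _ fun i hi =>
      Finset.measurable_sum _ fun j hj => measurable_one.indicator (hAA i hi j hj)]
    refine sum_congr rfl fun i hi => ?_
    rw [lintegral_finsetSum _ fun j hj => measurable_one.indicator (hAA i hi j hj)]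
    exact sum_congr rfl fun j hj => (lintegral_indicator_one (hAA i hi j hj)).symm

theorem sum_filter_Ico_sub_le (f : ℕ → ℝ≥0∞) (n₀ m n j : ℕ) :
    ∑ k ∈ Ico m n with j + n₀ ≤ k, f (k - j) ≤ ∑ i ∈ Ico n₀ n, f i := by
  rw [← sum_image (g := (· - j)) fun x hx y hy h => by
    simp only [coe_filter, Set.mem_ofPred_eq, mem_Ico] at hx hy h; omega]
  refine sum_le_sum_of_subset fun i hi => ?_
  simp only [mem_image, mem_filter, mem_Ico] at hi ⊢
  omega

section Window

variable {Ω : Type*} [MeasurableSpace Ω] (μ : Measure Ω) (A : ℕ → Set Ω) (n₀ : ℕ)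

theorem sum_sum_measure_inter_near_le (T : Finset ℕ) :
    ∑ j ∈ T, ∑ k ∈ T with ¬ j + n₀ ≤ k ∧ ¬ k + n₀ ≤ j, μ (A j ∩ A k)
      ≤ (2 * n₀ + 1) * ∑ j ∈ T, μ (A j) := by
  rw [mul_sum]
  refine sum_le_sum fun j _ => ?_
  have hcard : #{k ∈ T | ¬ j + n₀ ≤ k ∧ ¬ k + n₀ ≤ j} ≤ 2 * n₀ + 1 := by
    calc #{k ∈ T | ¬ j + n₀ ≤ k ∧ ¬ k + n₀ ≤ j} ≤ #(Icc (j - n₀) (j + n₀)) :=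
          card_le_card fun k hk => by simp only [mem_filter, mem_Icc] at hk ⊢; omega
      _ ≤ 2 * n₀ + 1 := by simp only [Nat.card_Icc]; omega
  calc ∑ k ∈ T with ¬ j + n₀ ≤ k ∧ ¬ k + n₀ ≤ j, μ (A j ∩ A k)
      ≤ ∑ k ∈ T with ¬ j + n₀ ≤ k ∧ ¬ k + n₀ ≤ j, μ (A j) :=
        sum_le_sum fun k _ => measure_mono Set.inter_subset_left
    _ = #{k ∈ T | ¬ j + n₀ ≤ k ∧ ¬ k + n₀ ≤ j} * μ (A j) := by rw [sum_const, nsmul_eq_mul]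
    _ ≤ (2 * n₀ + 1) * μ (A j) := by gcongr; exact_mod_cast hcard

variable {n₀} {c : ℝ≥0∞}
  (hbound : ∀ j k : ℕ, n₀ ≤ j → n₀ ≤ k → n₀ ≤ k - j →
      μ (A j ∩ A k) ≤ c * μ (A j) * μ (A (k - j)))
include hbound

theorem sum_sum_measure_inter_far_le {m : ℕ} (hm : n₀ ≤ m) (n : ℕ) :
    ∑ j ∈ Ico m n, ∑ k ∈ Ico m n with j + n₀ ≤ k, μ (A j ∩ A k)
      ≤ c * (∑ j ∈ Ico m n, μ (A j)) * ∑ i ∈ Ico n₀ n, μ (A i) := by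
  rw [mul_sum (Ico m n) (fun j => μ (A j)) c, sum_mul]
  refine sum_le_sum fun j hj => ?_
  calc ∑ k ∈ Ico m n with j + n₀ ≤ k, μ (A j ∩ A k)
      ≤ ∑ k ∈ Ico m n with j + n₀ ≤ k, c * μ (A j) * μ (A (k - j)) := by
        refine sum_le_sum fun k hk => hbound j k ?_ ?_ ?_ <;>
          simp only [mem_filter, mem_Ico] at hj hk <;> omega
    _ ≤ c * μ (A j) * ∑ i ∈ Ico n₀ n, μ (A i) := by
        rw [← mul_sum]; gcongr; exact sum_filter_Ico_sub_le _ n₀ m n j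

theorem sum_sum_measure_inter_le {m : ℕ} (hm : n₀ ≤ m) (n : ℕ) :
    ∑ j ∈ Ico m n, ∑ k ∈ Ico m n, μ (A j ∩ A k)
      ≤ 2 * c * (∑ j ∈ Ico m n, μ (A j)) * (∑ i ∈ Ico n₀ n, μ (A i))
        + (2 * n₀ + 1) * ∑ j ∈ Ico m n, μ (A j) := by
  set T := Ico m n
  have hsplit : ∀ j ∈ T, ∑ k ∈ T, μ (A j ∩ A k)
      ≤ ∑ k ∈ T with j + n₀ ≤ k, μ (A j ∩ A k) + ∑ k ∈ T with k + n₀ ≤ j, μ (A j ∩ A k)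
        + ∑ k ∈ T with ¬ j + n₀ ≤ k ∧ ¬ k + n₀ ≤ j, μ (A j ∩ A k) := fun j _ => by
    rw [← sum_filter_add_sum_filter_not T (j + n₀ ≤ ·), add_assoc,
      ← sum_filter_add_sum_filter_not (T.filter (¬ j + n₀ ≤ ·)) (· + n₀ ≤ j),
      filter_filter, filter_filter]
    gcongr
    exact fun h => h.2
  have hswap : ∑ j ∈ T, ∑ k ∈ T with k + n₀ ≤ j, μ (A j ∩ A k)
      = ∑ j ∈ T, ∑ k ∈ T with j + n₀ ≤ k, μ (A j ∩ A k) := by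
    simp_rw [sum_filter]
    rw [sum_comm]
    simp_rw [Set.inter_comm]
  calc ∑ j ∈ T, ∑ k ∈ T, μ (A j ∩ A k)
      ≤ ∑ j ∈ T, (∑ k ∈ T with j + n₀ ≤ k, μ (A j ∩ A k)
          + ∑ k ∈ T with k + n₀ ≤ j, μ (A j ∩ A k)
          + ∑ k ∈ T with ¬ j + n₀ ≤ k ∧ ¬ k + n₀ ≤ j, μ (A j ∩ A k)) := sum_le_sum hsplit
    _ = 2 * ∑ j ∈ T, ∑ k ∈ T with j + n₀ ≤ k, μ (A j ∩ A k)
          + ∑ j ∈ T, ∑ k ∈ T with ¬ j + n₀ ≤ k ∧ ¬ k + n₀ ≤ j, μ (A j ∩ A k) := by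
        rw [sum_add_distrib, sum_add_distrib, hswap, two_mul]
    _ ≤ 2 * (c * (∑ j ∈ T, μ (A j)) * ∑ i ∈ Ico n₀ n, μ (A i))
          + (2 * n₀ + 1) * ∑ j ∈ T, μ (A j) := by
        gcongr
        · exact sum_sum_measure_inter_far_le μ A hbound hm n
        · exact sum_sum_measure_inter_near_le μ A n₀ T
    _ = _ := by ring

theorem one_le_four_mul_measure_biUnion_Ico [IsFiniteMeasure μ] (hA : ∀ n, MeasurableSet (A n))
    {m n : ℕ} (hm : n₀ ≤ m) (hmn : m ≤ n) (hS : 1 ≤ ∑ k ∈ Ico m n, μ (A k))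
    (hK : 2 * c * ∑ i ∈ Ico n₀ m, μ (A i) + (2 * n₀ + 1) ≤ 2 * c * ∑ k ∈ Ico m n, μ (A k)) :
    1 ≤ 4 * c * μ (⋃ k ∈ Ico m n, A k) := by
  set S := ∑ k ∈ Ico m n, μ (A k)
  set U := ⋃ k ∈ Ico m n, A k
  have hS_ne_zero : S ^ 2 ≠ 0 := pow_ne_zero 2 (one_pos.trans_le hS).ne'
  have hS_ne_top : S ^ 2 ≠ ∞ :=
    ENNReal.pow_ne_top (ENNReal.sum_ne_top.2 fun k _ => measure_ne_top μ _)
  have hS' : ∑ i ∈ Ico n₀ n, μ (A i) = ∑ i ∈ Ico n₀ m, μ (A i) + S :=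
    (sum_Ico_consecutive _ hm hmn).symm
  refine (ENNReal.mul_le_mul_iff_left hS_ne_zero hS_ne_top).1 ?_
  calc 1 * S ^ 2 ≤ (∑ j ∈ Ico m n, ∑ k ∈ Ico m n, μ (A j ∩ A k)) * μ U := by
        rw [one_mul]
        exact sq_sum_measure_le_sum_measure_inter_mul_measure_biUnion μ _ fun k _ => hA k
    _ ≤ (2 * c * S * (∑ i ∈ Ico n₀ m, μ (A i) + S) + (2 * n₀ + 1) * S) * μ U := by
        rw [← hS']; gcongr; exact sum_sum_measure_inter_le μ A hbound hm n
    _ = (2 * c * S ^ 2 + (2 * c * ∑ i ∈ Ico n₀ m, μ (A i) + (2 * n₀ + 1)) * S) * μ U := by ring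
    _ ≤ (2 * c * S ^ 2 + 2 * c * S * S) * μ U := by gcongr
    _ = 4 * c * μ U * S ^ 2 := by ring

theorem inv_four_mul_le_measure_biUnion_Ici [IsFiniteMeasure μ] (hA : ∀ n, MeasurableSet (A n))
    (hc : c ≠ 0) (hc' : c ≠ ∞) (hsum : ∑' n, μ (A n) = ∞) {m : ℕ} (hm : n₀ ≤ m) :
    (4 * c)⁻¹ ≤ μ (⋃ k ≥ m, A k) := by
  set K := 2 * c * ∑ i ∈ Ico n₀ m, μ (A i) + (2 * n₀ + 1)
  have h2c : 2 * c ≠ 0 := mul_ne_zero two_ne_zero hc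
  have h2c' : 2 * c ≠ ∞ := ENNReal.mul_ne_top ENNReal.ofNat_ne_top hc'
  have hK : K ≠ ∞ := by simp [K, ENNReal.mul_eq_top, hc', ENNReal.sum_eq_top]
  obtain ⟨n, hmn, hn⟩ := exists_lt_sum_Ico_of_tsum_eq_top (fun k => measure_ne_top μ (A k))
    hsum m (ENNReal.add_ne_top.2 ⟨ENNReal.div_ne_top hK h2c, ENNReal.one_ne_top⟩ :
      K / (2 * c) + 1 ≠ ∞)
  have hS : 1 ≤ ∑ k ∈ Ico m n, μ (A k) := le_add_self.trans hn.le
  have hKS : K ≤ 2 * c * ∑ k ∈ Ico m n, μ (A k) := by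
    rw [mul_comm, ← ENNReal.div_le_iff h2c h2c']
    exact le_self_add.trans hn.le
  rw [ENNReal.inv_le_iff_le_mul (fun _ => mul_ne_zero four_ne_zero hc)
    (fun h => absurd h (ENNReal.mul_ne_top ENNReal.ofNat_ne_top hc'))]
  refine (one_le_four_mul_measure_biUnion_Ico μ A hbound hA hm hmn hS hKS).trans ?_
  refine mul_le_mul_right (measure_mono fun ω hω => ?_) _
  obtain ⟨k, hk, hωk⟩ := Set.mem_iUnion₂.1 hω
  exact Set.mem_iUnion₂.2 ⟨k, (mem_Ico.1 hk).1, hωk⟩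

end Window

theorem le_measure_limsup_atTop {Ω : Type*} [MeasurableSpace Ω] (μ : Measure Ω)
    [IsFiniteMeasure μ] {A : ℕ → Set Ω} (hA : ∀ n, MeasurableSet (A n)) {a : ℝ≥0∞}
    (h : ∀ᶠ m in atTop, a ≤ μ (⋃ k ≥ m, A k)) : a ≤ μ (limsup A atTop) := by
  rw [limsup_eq_iInf_iSup_of_nat]
  refine ge_of_tendsto (tendsto_measure_iInter_atTop ?_ ?_ ⟨0, measure_ne_top μ _⟩) h
  · exact fun m => (MeasurableSet.biUnion (Set.to_countable _) fun k _ => hA k).nullMeasurableSet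
  · exact fun m m' hmm' => Set.biUnion_subset_biUnion_left fun k (hk : m' ≤ k) => hmm'.trans hk

theorem stmt3_general {Ω : Type*} [MeasurableSpace Ω] (μ : Measure Ω) [IsProbabilityMeasure μ]
    (A : ℕ → Set Ω) (hA : ∀ n, MeasurableSet (A n))
    (n₀ : ℕ) (c : ℝ≥0∞) (hc : 0 < c) (hc' : c ≠ ⊤)
    (hbound : ∀ j k : ℕ, n₀ ≤ j → n₀ ≤ k → n₀ ≤ k - j →
      μ (A j ∩ A k) ≤ c * μ (A j) * μ (A (k - j))) :
    0 < μ (Filter.limsup A Filter.atTop) ↔ (∑' n : ℕ, μ (A n)) = ⊤ := by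
  refine ⟨fun hpos => by_contra fun hne => hpos.ne' (measure_limsup_atTop_eq_zero hne),
    fun hsum => ?_⟩
  refine (ENNReal.inv_pos.2 (ENNReal.mul_ne_top (ENNReal.ofNat_ne_top (n := 4)) hc')).trans_le ?_
  exact le_measure_limsup_atTop μ hA (eventually_atTop.2 ⟨n₀, fun m hm =>
    inv_four_mul_le_measure_biUnion_Ici μ A hbound hA hc.ne' hc' hsum hm⟩)

/-- Borel–Cantelli variant (consequence of the Kochen–Stone lemma): if
`P(A_j ∩ A_k) ≤ c P(A_j) P(A_{k-j})` for all `j, k ≥ n₀` with `k - j ≥ n₀`,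
then `P(A_n i.o.) > 0` iff `∑ P(A_n) = ∞`. -/
theorem stmt3 {Ω : Type*} [MeasurableSpace Ω] (μ : Measure Ω) [IsProbabilityMeasure μ]
    (A : ℕ → Set Ω) (hA : ∀ n, MeasurableSet (A n))
    (n₀ : ℕ) (hn₀ : 1 ≤ n₀) (c : ℝ≥0∞) (hc : 0 < c) (hc' : c ≠ ⊤)
    (hbound : ∀ j k : ℕ, n₀ ≤ j → n₀ ≤ k → n₀ ≤ k - j →
      μ (A j ∩ A k) ≤ c * μ (A j) * μ (A (k - j))) :
    0 < μ (Filter.limsup A Filter.atTop) ↔ (∑' n : ℕ, μ (A n)) = ⊤ :=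
  stmt3_general μ A hA n₀ c hc hc' hbound
end

section
/- Let (X_i) be i.i.d. with symmetric distribution, S_n = X_1 + ⋯ + X_n, and (g_n) an increasing sequence of positive numbers. Then the series ∑_n P(g_n|S_n| < M) is either infinite for all M > 0 or finite for all M > 0. -/
/-!
Suppose `∑ P(g_n |S_n| < M₀) < ∞` for some `M₀ > 0` and let `M > 0`. For `k = ⌊n/2⌋` write
`S_n = S_k + (S_{2k} - S_k) + (S_n - S_{2k})` with independent summands, so that the law of `S_n`
is `(ρ ∗ ρ) ∗ τ`, where `ρ` is the law of `S_k`, which is symmetric. Cutting `ℝ` into cells of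
length `l` and comparing, by AM-GM, the products `ρ(cᵢ) ρ(cⱼ)` that can reach a given interval of
length `l` with the sum of the `ρ(cᵢ)²`, symmetry shows that every such interval has
`ρ ∗ ρ`-mass at most `2 (ρ ∗ ρ)(-l, l)`. Convolving with `τ` averages translates, so it does not
increase this bound. Covering `(-M/g_n, M/g_n)` by `⌈2M/M₀⌉` intervals of length `M₀/g_{2k}`
(recall `g_{2k} ≤ g_n`) gives `P(g_n |S_n| < M) ≤ 2 ⌈2M/M₀⌉ P(g_{2k} |S_{2k}| < M₀)`, and summing
over `n` shows that the series for `M` is finite as well.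
-/

open MeasureTheory ProbabilityTheory Function Set
open scoped ENNReal

namespace ENNReal

lemma two_mul_le_add_sq (a b : ℝ≥0∞) : 2 * a * b ≤ a ^ 2 + b ^ 2 := by
  rcases eq_or_ne a ⊤ with rfl | ha
  · simp
  rcases eq_or_ne b ⊤ with rfl | hb
  · simp
  lift a to NNReal using ha
  lift b to NNReal using hb
  exact_mod_cast _root_.two_mul_le_add_sq a b

lemma tsum_mul_sub_le_tsum_sq (a : ℤ → ℝ≥0∞) (j : ℤ) :
    ∑' i, a i * a (j - i) ≤ ∑' i, a i ^ 2 := by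
  have h : 2 * ∑' i, a i * a (j - i) ≤ 2 * ∑' i, a i ^ 2 :=
    calc 2 * ∑' i, a i * a (j - i) = ∑' i, 2 * a i * a (j - i) := by
          rw [← ENNReal.tsum_mul_left]; simp only [mul_assoc]
      _ ≤ ∑' i, (a i ^ 2 + a (j - i) ^ 2) :=
          ENNReal.tsum_le_tsum fun i => two_mul_le_add_sq _ _
      _ = 2 * ∑' i, a i ^ 2 := by
          rw [ENNReal.tsum_add, ← (Equiv.subLeft j).tsum_eq (fun i => a i ^ 2), two_mul]
          rfl
  exact (ENNReal.mul_le_mul_iff_right two_ne_zero ofNat_ne_top).1 h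

lemma tsum_two_mul_div_two_le (f : ℕ → ℝ≥0∞) : ∑' n, f (2 * (n / 2)) ≤ 2 * ∑' n, f n := by
  rw [← tsum_even_add_odd ENNReal.summable ENNReal.summable]
  have heven : ∀ k, 2 * (2 * k / 2) = 2 * k := fun k => by omega
  have hodd : ∀ k, 2 * ((2 * k + 1) / 2) = 2 * k := fun k => by omega
  simp only [heven, hodd, ← two_mul]
  gcongr 2 * ?_
  exact ENNReal.tsum_comp_le_tsum_of_injective (mul_right_injective₀ two_ne_zero) f

end ENNReal

lemma add_eq_zero_or_neg_one_of_add_mem_Ico {s l u v : ℝ} {i j : ℤ} (hl : 0 < l)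
    (hu : u ∈ Ico (s + i • l) (s + (i + 1) • l)) (hv : v ∈ Ico (s + j • l) (s + (j + 1) • l))
    (huv : u + v ∈ Ico (s + s) (s + s + l)) : i + j = 0 ∨ i + j = -1 := by
  simp only [mem_Ico, zsmul_eq_mul, Int.cast_add, Int.cast_one] at hu hv huv
  have hlt : ((i + j : ℤ) : ℝ) < 1 := by
    push_cast; by_contra! h; nlinarith
  have hgt : (-2 : ℝ) < ((i + j : ℤ) : ℝ) := by
    push_cast; by_contra! h; nlinarith
  have : i + j < 1 := by exact_mod_cast hlt
  have : -2 < i + j := by exact_mod_cast hgt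
  omega

namespace MeasureTheory.Measure

section ConvPow

variable {M : Type*} [AddMonoid M] [MeasurableSpace M] [MeasurableAdd₂ M]

noncomputable def convPow (ρ : Measure M) : ℕ → Measure M
  | 0 => dirac 0
  | n + 1 => convPow ρ n ∗ ρ

variable (ρ : Measure M)

instance [SFinite ρ] (n : ℕ) : SFinite (ρ.convPow n) := by
  induction n with
  | zero => unfold convPow; infer_instance
  | succ n ih => unfold convPow; infer_instance

instance [IsProbabilityMeasure ρ] (n : ℕ) : IsProbabilityMeasure (ρ.convPow n) := by
  induction n with
  | zero => unfold convPow; infer_instance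
  | succ n ih => unfold convPow; infer_instance

lemma convPow_add [SFinite ρ] (m n : ℕ) : ρ.convPow (m + n) = ρ.convPow m ∗ ρ.convPow n := by
  induction n with
  | zero => simp [convPow, conv_dirac_zero]
  | succ n ih => rw [← add_assoc, convPow, ih, convPow, conv_assoc]

end ConvPow

section NegInvariant

variable {G : Type*} [AddCommGroup G] [MeasurableSpace G] [MeasurableAdd₂ G] [MeasurableNeg G]

instance (μ ν : Measure G) [SFinite μ] [SFinite ν] [μ.IsNegInvariant] [ν.IsNegInvariant] :
    (μ ∗ ν).IsNegInvariant :=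
  ⟨by
    have h := map_conv_addMonoidHom (μ := μ) (ν := ν) (negAddMonoidHom : G →+ G) measurable_neg
    simp only [coe_negAddMonoidHom] at h
    rw [neg_def, h, ← neg_def, ← neg_def, neg_eq_self, neg_eq_self]⟩

instance (ρ : Measure G) [SFinite ρ] [ρ.IsNegInvariant] (n : ℕ) :
    (ρ.convPow n).IsNegInvariant := by
  induction n with
  | zero => exact ⟨by rw [convPow, neg_def, map_dirac' measurable_neg, neg_zero]⟩
  | succ n ih => unfold convPow; infer_instance

end NegInvariant

variable {ρ ν τ : Measure ℝ}

lemma conv_apply_le_of_forall_preimage_add_le [SFinite ν] [IsProbabilityMeasure τ] {A : Set ℝ}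
    (hA : MeasurableSet A) {C : ℝ≥0∞} (h : ∀ y, ν ((· + y) ⁻¹' A) ≤ C) : (ν ∗ τ) A ≤ C := by
  rw [conv, map_apply measurable_add hA, prod_apply_symm (measurable_add hA)]
  calc ∫⁻ y, ν ((fun x => (x, y)) ⁻¹' ((fun p : ℝ × ℝ => p.1 + p.2) ⁻¹' A)) ∂τ
      ≤ ∫⁻ _, C ∂τ := lintegral_mono fun y => h y
    _ = C := by simp

lemma measure_Ico_add_nat_mul_le (ν : Measure ℝ) {l : ℝ} (hl : 0 ≤ l) {C : ℝ≥0∞}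
    (h : ∀ y, ν (Ico y (y + l)) ≤ C) (w : ℝ) (N : ℕ) : ν (Ico w (w + N * l)) ≤ N * C := by
  induction N with
  | zero => simp
  | succ N ih =>
    have hsplit : Ico w (w + (N + 1 : ℕ) * l) =
        Ico w (w + N * l) ∪ Ico (w + N * l) (w + N * l + l) := by
      rw [Ico_union_Ico_eq_Ico (by nlinarith [N.cast_nonneg (α := ℝ)]) (by linarith)]
      push_cast; ring_nf
    calc ν (Ico w (w + (N + 1 : ℕ) * l)) ≤ N * C + C := by
          rw [hsplit]; exact (measure_union_le _ _).trans (add_le_add ih (h _))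
      _ = (N + 1 : ℕ) * C := by push_cast; ring

lemma tsum_sq_le_conv_self_Ioo [SFinite ρ] [ρ.IsNegInvariant] {ι : Type*} [Countable ι]
    {c : ι → Set ℝ} (hc : ∀ i, MeasurableSet (c i)) (hdisj : Pairwise (Disjoint on c)) {l : ℝ}
    (hdiam : ∀ i, ∀ x ∈ c i, ∀ y ∈ c i, |x - y| < l) :
    ∑' i, ρ (c i) ^ 2 ≤ (ρ ∗ ρ) (Ioo (-l) l) := by
  rw [conv, map_apply measurable_add measurableSet_Ioo]
  calc ∑' i, ρ (c i) ^ 2 = ∑' i, (ρ.prod ρ) (c i ×ˢ (-c i)) := by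
        simp only [prod_prod, measure_neg, sq]
    _ = (ρ.prod ρ) (⋃ i, c i ×ˢ (-c i)) :=
        (measure_iUnion (fun i j hij => (hdisj hij).set_prod_left _ _)
          fun i => (hc i).prod (hc i).neg).symm
    _ ≤ _ := by
        refine measure_mono fun p hp => ?_
        obtain ⟨i, hu, hv⟩ := mem_iUnion.1 hp
        exact abs_lt.1 (by simpa only [sub_neg_eq_add] using hdiam i _ hu _ hv)

lemma conv_self_Ico_le_two_mul [SFinite ρ] [ρ.IsNegInvariant] {l : ℝ} (hl : 0 < l) (y : ℝ) :
    (ρ ∗ ρ) (Ico y (y + l)) ≤ 2 * (ρ ∗ ρ) (Ioo (-l) l) := by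
  -- Centring the cells at `y / 2` leaves only two cells `c j` compatible with a given `c i`.
  set c : ℤ → Set ℝ := fun i => Ico (y / 2 + i • l) (y / 2 + (i + 1) • l)
  have hcover : (fun p : ℝ × ℝ => p.1 + p.2) ⁻¹' Ico y (y + l) ⊆
      ⋃ i, (c i ×ˢ c (0 - i) ∪ c i ×ˢ c (-1 - i)) := by
    rintro ⟨u, v⟩ huv
    obtain ⟨i, hi⟩ := mem_iUnion.1 ((iUnion_Ico_add_zsmul hl (y / 2)).ge (mem_univ u))
    obtain ⟨j, hj⟩ := mem_iUnion.1 ((iUnion_Ico_add_zsmul hl (y / 2)).ge (mem_univ v))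
    have huv' : u + v ∈ Ico (y / 2 + y / 2) (y / 2 + y / 2 + l) := by rwa [add_halves]
    rcases add_eq_zero_or_neg_one_of_add_mem_Ico hl hi hj huv' with h | h
    · exact mem_iUnion.2 ⟨i, Or.inl ⟨hi, by rwa [show 0 - i = j by omega]⟩⟩
    · exact mem_iUnion.2 ⟨i, Or.inr ⟨hi, by rwa [show -1 - i = j by omega]⟩⟩
  have hdiam : ∀ i, ∀ x ∈ c i, ∀ z ∈ c i, |x - z| < l := by
    intro i x hx z hz
    simp only [c, mem_Ico, zsmul_eq_mul, Int.cast_add, Int.cast_one] at hx hz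
    rw [abs_sub_lt_iff]
    constructor <;> linarith
  rw [conv, map_apply measurable_add measurableSet_Ico]
  calc (ρ.prod ρ) ((fun p : ℝ × ℝ => p.1 + p.2) ⁻¹' Ico y (y + l))
      ≤ ∑' i, (ρ.prod ρ) (c i ×ˢ c (0 - i) ∪ c i ×ˢ c (-1 - i)) :=
        (measure_mono hcover).trans (measure_iUnion_le _)
    _ ≤ ∑' i, (ρ (c i) * ρ (c (0 - i)) + ρ (c i) * ρ (c (-1 - i))) :=
        ENNReal.tsum_le_tsum fun i => by
          rw [← prod_prod, ← prod_prod]; exact measure_union_le _ _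
    _ ≤ ∑' i, ρ (c i) ^ 2 + ∑' i, ρ (c i) ^ 2 := by
        rw [ENNReal.tsum_add]
        exact add_le_add (ENNReal.tsum_mul_sub_le_tsum_sq _ 0)
          (ENNReal.tsum_mul_sub_le_tsum_sq _ (-1))
    _ ≤ 2 * (ρ ∗ ρ) (Ioo (-l) l) := by
        rw [← two_mul]
        gcongr
        exact tsum_sq_le_conv_self_Ioo (fun _ => measurableSet_Ico)
          (pairwise_disjoint_Ico_add_zsmul (y / 2) l) hdiam

lemma convPow_Ioo_le (ρ : Measure ℝ) [IsProbabilityMeasure ρ] [ρ.IsNegInvariant] {k n N : ℕ}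
    (hkn : 2 * k ≤ n) {l L : ℝ} (hl : 0 < l) (hL : 2 * L ≤ N * l) :
    ρ.convPow n (Ioo (-L) L) ≤ 2 * N * ρ.convPow (2 * k) (Ioo (-l) l) := by
  set σ := ρ.convPow k
  have h2k : ρ.convPow (2 * k) = σ ∗ σ := by rw [two_mul, convPow_add]
  have hn : ρ.convPow n = (σ ∗ σ) ∗ ρ.convPow (n - 2 * k) := by
    rw [← h2k, ← convPow_add, Nat.add_sub_cancel' hkn]
  rw [hn, h2k]
  calc ((σ ∗ σ) ∗ ρ.convPow (n - 2 * k)) (Ioo (-L) L)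
      ≤ ((σ ∗ σ) ∗ ρ.convPow (n - 2 * k)) (Ico (-L) (-L + N * l)) :=
        measure_mono (Ioo_subset_Ico_self.trans (Ico_subset_Ico_right (by linarith)))
    _ ≤ N * (2 * (σ ∗ σ) (Ioo (-l) l)) := by
        refine conv_apply_le_of_forall_preimage_add_le measurableSet_Ico fun y => ?_
        rw [preimage_add_const_Ico, show -L + N * l - y = -L - y + N * l by ring]
        exact measure_Ico_add_nat_mul_le _ hl.le (conv_self_Ico_le_two_mul hl) _ N
    _ = 2 * N * (σ ∗ σ) (Ioo (-l) l) := by ring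

lemma convPow_Ioo_div_le (ρ : Measure ℝ) [IsProbabilityMeasure ρ] [ρ.IsNegInvariant]
    {g : ℕ → ℝ} (hg : ∀ n, 0 < g n) (hmono : Monotone g) {M M₀ : ℝ} (hM : 0 ≤ M) (hM₀ : 0 < M₀)
    (n : ℕ) : ρ.convPow n (Ioo (-(M / g n)) (M / g n)) ≤ 2 * ⌈2 * M / M₀⌉₊ *
      ρ.convPow (2 * (n / 2)) (Ioo (-(M₀ / g (2 * (n / 2)))) (M₀ / g (2 * (n / 2)))) := by
  refine ρ.convPow_Ioo_le (Nat.mul_div_le n 2) (div_pos hM₀ (hg _)) ?_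
  calc 2 * (M / g n) ≤ 2 * M / M₀ * (M₀ / g (2 * (n / 2))) := by
        rw [div_mul_div_cancel₀ hM₀.ne', mul_div_assoc]
        gcongr
        · exact hg _
        · exact hmono (Nat.mul_div_le n 2)
    _ ≤ ⌈2 * M / M₀⌉₊ * (M₀ / g (2 * (n / 2))) :=
        mul_le_mul_of_nonneg_right (Nat.le_ceil _) (div_pos hM₀ (hg _)).le

end MeasureTheory.Measure

section RandomWalk

variable {Ω : Type*} [MeasurableSpace Ω] {μ : Measure Ω}

lemma ProbabilityTheory.iIndepFun.map_sum_range_eq_convPow [IsProbabilityMeasure μ]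
    {M : Type*} [AddCommMonoid M] [MeasurableSpace M] [MeasurableAdd₂ M] {X : ℕ → Ω → M}
    (hindep : iIndepFun X μ) (hmeas : ∀ i, Measurable (X i))
    (hident : ∀ i, IdentDistrib (X i) (X 0) μ μ) (n : ℕ) :
    μ.map (∑ i ∈ Finset.range n, X i) = (μ.map (X 0)).convPow n := by
  induction n with
  | zero => rw [Finset.sum_range_zero, Pi.zero_def, Measure.map_const, measure_univ, one_smul,
      Measure.convPow]
  | succ n ih =>
    rw [Finset.sum_range_succ, (hindep.indepFun_sum_range_succ hmeas n).map_add_eq_map_conv_map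
      (by fun_prop) (hmeas n), ih, (hident n).map_eq, Measure.convPow]

lemma measure_mul_abs_lt_eq_map {Y : Ω → ℝ} (hY : Measurable Y) {c : ℝ} (hc : 0 < c) (M : ℝ) :
    μ {ω | c * |Y ω| < M} = μ.map Y (Ioo (-(M / c)) (M / c)) := by
  rw [Measure.map_apply hY measurableSet_Ioo]
  congr 1
  ext ω
  exact (lt_div_iff₀' hc).symm.trans abs_lt

end RandomWalk

/-- Dichotomy: for a random walk with i.i.d. symmetric steps and `(g_n)` increasing positive,
the series `∑ P(g_n |S_n| < M)` is either infinite for all `M > 0` or finite for all `M > 0`. -/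
theorem stmt6 {Ω : Type*} [MeasurableSpace Ω] (μ : Measure Ω) [IsProbabilityMeasure μ]
    (X : ℕ → Ω → ℝ) (hmeas : ∀ i, Measurable (X i))
    (hindep : iIndepFun X μ)
    (hident : ∀ i, IdentDistrib (X i) (X 0) μ μ)
    (hsym : Measure.map (X 0) μ = Measure.map (fun ω => -X 0 ω) μ)
    (S : ℕ → Ω → ℝ) (hS : ∀ n ω, S n ω = ∑ i ∈ Finset.range n, X i ω)
    (g : ℕ → ℝ) (hg : ∀ n, 0 < g n) (hmono : Monotone g) :
    (∀ M : ℝ, 0 < M → (∑' n : ℕ, μ {ω | g n * |S n ω| < M}) = ⊤) ∨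
    (∀ M : ℝ, 0 < M → (∑' n : ℕ, μ {ω | g n * |S n ω| < M}) ≠ ⊤) := by
  set ρ := μ.map (X 0)
  have : IsProbabilityMeasure ρ := Measure.isProbabilityMeasure_map (hmeas 0).aemeasurable
  have : ρ.IsNegInvariant :=
    ⟨by rw [Measure.neg_def, Measure.map_map measurable_neg (hmeas 0)]; exact hsym.symm⟩
  have hSsum : ∀ n, S n = ∑ i ∈ Finset.range n, X i := fun n => funext fun ω => by
    rw [hS, Finset.sum_apply]
  have hlaw : ∀ M n, μ {ω | g n * |S n ω| < M} = ρ.convPow n (Ioo (-(M / g n)) (M / g n)) := by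
    intro M n
    rw [measure_mul_abs_lt_eq_map (by rw [hSsum]; fun_prop) (hg n), hSsum,
      hindep.map_sum_range_eq_convPow hmeas hident]
  refine or_iff_not_imp_left.2 fun hinf M hM => ?_
  push Not at hinf
  obtain ⟨M₀, hM₀, hfin⟩ := hinf
  have key : ∀ n, μ {ω | g n * |S n ω| < M} ≤
      2 * ⌈2 * M / M₀⌉₊ * μ {ω | g (2 * (n / 2)) * |S (2 * (n / 2)) ω| < M₀} := fun n => by
    rw [hlaw, hlaw]
    exact ρ.convPow_Ioo_div_le hg hmono hM.le hM₀ n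
  have hbound : ∑' n, μ {ω | g n * |S n ω| < M} ≤
      2 * ⌈2 * M / M₀⌉₊ * (2 * ∑' n, μ {ω | g n * |S n ω| < M₀}) :=
    calc ∑' n, μ {ω | g n * |S n ω| < M}
        ≤ 2 * ⌈2 * M / M₀⌉₊ * ∑' n, μ {ω | g (2 * (n / 2)) * |S (2 * (n / 2)) ω| < M₀} := by
          rw [← ENNReal.tsum_mul_left]; exact ENNReal.tsum_le_tsum key
      _ ≤ 2 * ⌈2 * M / M₀⌉₊ * (2 * ∑' n, μ {ω | g n * |S n ω| < M₀}) := by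
          gcongr; exact ENNReal.tsum_two_mul_div_two_le fun n => μ {ω | g n * |S n ω| < M₀}
  exact ne_top_of_le_ne_top (by finiteness) hbound
end
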